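/- arXiv:2507.00495 — 2 statements merged into one kernel-verified Lean document; each statement's English description precedes it below -/
import Mathlib

section
/- Let {V_n} satisfy the Fibonacci recurrence, d be even with k > 1, and s be defined via the greedy algorithm as s(x) = ∑ λ_i V_{n+id}. Then s(F_{(k+1)d}/F_d − 1) = V_{n+(k+1)d} − V_{n+d} + V_n. -/
def lucas : ℕ → ℕ
  | 0 => 2
  | 1 => 1
  | n + 2 => lucas (n + 1) + lucas n

/-- the `i`-th greedy weight `F_{id}/F_d`. -/
def gw (d i : ℕ) : ℕ := Nat.fib (i * d) / Nat.fib d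

/-- `gRem d k x m` is the remaining value after the greedy algorithm for `x`,
with respect to the weights `gw d 1, …, gw d k`, has processed the top `m`
indices `k, k-1, …, k-m+1`. -/
def gRem (d k x : ℕ) : ℕ → ℕ
  | 0 => x
  | m + 1 => gRem d k x m % gw d (k - m)

/-- the `i`-th greedy coefficient `λ_i` of `x` w.r.t. `gw d 1, …, gw d k`:
`λ_i = ⌊(x − ∑_{j>i} λ_j · gw d j) / gw d i⌋`. -/
def gLam (d k x i : ℕ) : ℕ := gRem d k x (k - i) / gw d i

lemma lucas_pos : ∀ n, 0 < lucas n
  | 0 => by simp [lucas]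
  | 1 => by simp [lucas]
  | n + 2 => by
      have h1 := lucas_pos (n + 1)
      have h2 := lucas_pos n
      simp only [lucas]; omega

lemma lucas_eq : ∀ n, lucas (n + 1) = Nat.fib (n + 2) + Nat.fib n
  | 0 => by simp [lucas]
  | 1 => by simp [lucas]; rfl
  | n + 2 => by
      have h1 := lucas_eq (n + 1)
      have h2 := lucas_eq n
      simp only [show n + 1 + 2 = n + 3 from rfl, show n + 1 + 1 = n + 2 from rfl] at h1
      have f1 : Nat.fib (n + 4) = Nat.fib (n + 2) + Nat.fib (n + 3) := Nat.fib_add_two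
      have f2 : Nat.fib (n + 2) = Nat.fib n + Nat.fib (n + 1) := Nat.fib_add_two
      show lucas (n + 2) + lucas (n + 1) = Nat.fib (n + 4) + Nat.fib (n + 2)
      omega

lemma cassini : ∀ n : ℕ, (Nat.fib (n + 2) : ℤ) * Nat.fib n + (-1) ^ n = (Nat.fib (n + 1) : ℤ) ^ 2 := by
  intro n
  induction n with
  | zero => simp
  | succ n ih =>
      have h3 : (Nat.fib (n + 3) : ℤ) = Nat.fib (n + 1) + Nat.fib (n + 2) := by
        exact_mod_cast congrArg (Nat.cast (R := ℤ)) (Nat.fib_add_two (n := n + 1))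
      have h2 : (Nat.fib (n + 2) : ℤ) = Nat.fib n + Nat.fib (n + 1) := by
        exact_mod_cast congrArg (Nat.cast (R := ℤ)) (Nat.fib_add_two (n := n))
      rw [pow_succ]
      linear_combination (Nat.fib (n + 1) : ℤ) * h3 - ih - (Nat.fib (n + 2) : ℤ) * h2

/-- `F_{2d} = L_d F_d`. -/
lemma fib_two_mul_eq (e : ℕ) : Nat.fib (2 * (e + 1)) = lucas (e + 1) * Nat.fib (e + 1) := by
  rw [Nat.fib_two_mul, lucas_eq]
  have f2 : Nat.fib (e + 2) = Nat.fib e + Nat.fib (e + 1) := Nat.fib_add_two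
  have h : 2 * Nat.fib (e + 2) - Nat.fib (e + 1) = Nat.fib (e + 2) + Nat.fib e := by omega
  rw [h]; ring

/-- `F_{2e+1} + 1 = L_{e+1} F_e` for odd `e`. -/
lemma fib_two_mul_add_one_eq (e : ℕ) (he : Odd e) :
    Nat.fib (2 * e + 1) + 1 = lucas (e + 1) * Nat.fib e := by
  have hc : Nat.fib (e + 2) * Nat.fib e = Nat.fib (e + 1) ^ 2 + 1 := by
    have := cassini e
    have hm : ((-1 : ℤ)) ^ e = -1 := Odd.neg_one_pow he
    rw [hm] at this
    exact_mod_cast (by linarith : (Nat.fib (e + 2) * Nat.fib e : ℤ) = (Nat.fib (e + 1) : ℤ) ^ 2 + 1)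
  rw [Nat.fib_two_mul_add_one, lucas_eq, add_mul, hc]; ring

/-- any Fibonacci-like sequence: `V (m+p+1) = F_p V m + F_{p+1} V (m+1)`. -/
lemma genV (V : ℕ → ℕ) (hV : ∀ m, V (m + 2) = V (m + 1) + V m) :
    ∀ p m, V (m + p + 1) = Nat.fib p * V m + Nat.fib (p + 1) * V (m + 1)
  | 0, m => by simp
  | 1, m => by simpa [Nat.fib_one] using (hV m).trans (by ring_nf)
  | p + 2, m => by
      have h1 := genV V hV (p + 1) m
      have h2 := genV V hV p m
      have hr : V (m + (p + 2) + 1) = V (m + (p + 1) + 1) + V (m + p + 1) := by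
        have := hV (m + p + 1)
        have e1 : m + p + 1 + 2 = m + (p + 2) + 1 := by omega
        have e2 : m + p + 1 + 1 = m + (p + 1) + 1 := by omega
        rw [e1, e2] at this; exact this
      simp only [show p + 1 + 1 = p + 2 from rfl] at h1
      have f1 : Nat.fib (p + 2) = Nat.fib p + Nat.fib (p + 1) := Nat.fib_add_two
      have f2 : Nat.fib (p + 3) = Nat.fib (p + 1) + Nat.fib (p + 2) := Nat.fib_add_two
      rw [hr, h1, h2, show p + 2 + 1 = p + 3 from rfl, f2, f1]; ring

/-- the key recurrence: for even `d > 0`, `V (m + 2d) + V m = L_d · V (m + d)`. -/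
lemma lucasV (V : ℕ → ℕ) (hV : ∀ m, V (m + 2) = V (m + 1) + V m)
    (d : ℕ) (hd : 0 < d) (hde : Even d) (m : ℕ) :
    V (m + 2 * d) + V m = lucas d * V (m + d) := by
  obtain ⟨e, rfl⟩ : ∃ e, d = e + 1 := ⟨d - 1, by omega⟩
  have he : Odd e := by
    rcases Nat.even_or_odd e with h | h
    · exact absurd (by simpa [Nat.even_add_one] using hde) (by simp [h])
    · exact h
  have h1 := genV V hV (2 * e + 1) m
  have h2 := genV V hV e m
  have key1 := fib_two_mul_add_one_eq e he
  have key2 := fib_two_mul_eq e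
  have e1 : m + (2 * e + 1) + 1 = m + 2 * (e + 1) := by omega
  have e2 : m + e + 1 = m + (e + 1) := by omega
  rw [e1] at h1
  rw [e2] at h2
  have e3 : 2 * e + 1 + 1 = 2 * (e + 1) := by omega
  rw [e3] at h1
  rw [h1, h2]
  zify
  have k1 : (Nat.fib (2 * e + 1) : ℤ) + 1 = (lucas (e + 1) : ℤ) * Nat.fib e := by exact_mod_cast key1
  have k2 : (Nat.fib (2 * (e + 1)) : ℤ) = (lucas (e + 1) : ℤ) * Nat.fib (e + 1) := by exact_mod_cast key2
  linear_combination (V m : ℤ) * k1 + (V (m + 1) : ℤ) * k2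

lemma gw_mul (d : ℕ) (i : ℕ) : Nat.fib d * gw d i = Nat.fib (i * d) :=
  Nat.mul_div_cancel' (Nat.fib_dvd d (i * d) (dvd_mul_left d i))

lemma gw_zero (d : ℕ) : gw d 0 = 0 := by simp [gw]

lemma gw_one (d : ℕ) (hd : 0 < d) : gw d 1 = 1 := by
  simp [gw, Nat.div_self (Nat.fib_pos.mpr hd)]

lemma gw_rec (d : ℕ) (hd : 0 < d) (hde : Even d) (i : ℕ) :
    gw d (i + 2) + gw d i = lucas d * gw d (i + 1) := by
  have hf := lucasV Nat.fib (fun m => by rw [Nat.fib_add_two]; omega) d hd hde (i * d)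
  have e1 : i * d + 2 * d = (i + 2) * d := by ring
  have e2 : i * d + d = (i + 1) * d := by ring
  rw [e1, e2] at hf
  have hdpos : 0 < Nat.fib d := Nat.fib_pos.mpr hd
  apply Nat.eq_of_mul_eq_mul_left hdpos
  rw [Nat.mul_add, gw_mul, gw_mul, hf, ← gw_mul d (i + 1)]
  ring

lemma lucas_ge_three : ∀ n, 3 ≤ lucas (n + 2)
  | 0 => by simp [lucas]
  | n + 1 => by
      have h1 := lucas_ge_three n
      have h2 := lucas_pos (n + 1)
      show 3 ≤ lucas (n + 2) + lucas (n + 1)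
      omega

lemma lucas_ge_three' (d : ℕ) (hd : 0 < d) (hde : Even d) : 3 ≤ lucas d := by
  obtain ⟨e, rfl⟩ : ∃ e, d = e + 2 := by
    obtain ⟨c, rfl⟩ := hde
    exact ⟨c + c - 2, by omega⟩
  exact lucas_ge_three e

lemma gw_mono (d : ℕ) (hd : 0 < d) (hde : Even d) :
    ∀ i, 0 < gw d (i + 1) ∧ gw d (i + 1) < gw d (i + 2) := by
  have hL := lucas_ge_three' d hd hde
  intro i
  induction i with
  | zero =>
      have h := gw_rec d hd hde 0
      rw [gw_zero, gw_one d hd] at h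
      constructor
      · rw [gw_one d hd]; omega
      · rw [gw_one d hd]; omega
  | succ i ih =>
      obtain ⟨hpos, hlt⟩ := ih
      have h := gw_rec d hd hde (i + 1)
      simp only [show i + 1 + 2 = i + 3 from rfl, show i + 1 + 1 = i + 2 from rfl] at h ⊢
      have hmul : 3 * gw d (i + 2) ≤ lucas d * gw d (i + 2) :=
        Nat.mul_le_mul_right _ hL
      constructor
      · omega
      · omega

/-- division/mod decomposition helper. -/
lemma divmod_key (b q r x : ℕ) (hx : x = r + b * q) (hr : r < b) : x % b = r ∧ x / b = q := by
  subst hx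
  refine ⟨?_, ?_⟩
  · rw [Nat.add_mul_mod_self_left, Nat.mod_eq_of_lt hr]
  · rw [Nat.add_mul_div_left _ _ (by omega : 0 < b), Nat.div_eq_of_lt hr, Nat.zero_add]

lemma decomp1 (L a b c : ℕ) (h : c + a = L * b) (hL : 3 ≤ L) (hab : a < b) :
    c - 1 = (b - a - 1) + b * (L - 1) := by
  have e : b * (L - 1) + b = L * b := by
    obtain ⟨L', rfl⟩ : ∃ L', L = L' + 3 := ⟨L - 3, by omega⟩
    show b * (L' + 2) + b = (L' + 3) * b
    ring
  generalize hA : b * (L - 1) = A at e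
  generalize hB : L * b = B at e h
  omega

lemma decomp2 (L a b c : ℕ) (h : c + a = L * b) (hL : 3 ≤ L) (hab : a < b) :
    c - b - 1 = (b - a - 1) + b * (L - 2) := by
  have e : b * (L - 2) + 2 * b = L * b := by
    obtain ⟨L', rfl⟩ : ∃ L', L = L' + 3 := ⟨L - 3, by omega⟩
    show b * (L' + 1) + 2 * b = (L' + 3) * b
    ring
  generalize hA : b * (L - 2) = A at e
  generalize hB : L * b = B at e h
  omega

/-- the three `gw`-facts at index `j ≥ 1`: recurrence, monotonicity, positivity. -/
lemma gw_facts (d : ℕ) (hd : 0 < d) (hde : Even d) (j : ℕ) (hj : 1 ≤ j) :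
    gw d (j + 1) + gw d (j - 1) = lucas d * gw d j ∧ gw d (j - 1) < gw d j := by
  obtain ⟨j', rfl⟩ : ∃ j', j = j' + 1 := ⟨j - 1, by omega⟩
  have h1 := gw_rec d hd hde j'
  have h2 := gw_mono d hd hde j'
  cases j' with
  | zero =>
      simp only [Nat.add_sub_cancel]
      exact ⟨by simpa using h1, by rw [gw_zero, gw_one d hd]; omega⟩
  | succ j'' =>
      simp only [Nat.add_sub_cancel]
      refine ⟨h1, ?_⟩
      have := (gw_mono d hd hde j'').2
      exact this

lemma gRem_eq (d k : ℕ) (hd : 0 < d) (hde : Even d) (hk : 1 < k) :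
    ∀ m, 1 ≤ m → m ≤ k - 1 →
      gRem d k (gw d (k + 1) - 1) m = gw d (k - m + 1) - gw d (k - m) - 1 := by
  have hL := lucas_ge_three' d hd hde
  intro m
  induction m with
  | zero => omega
  | succ m ih =>
      intro _ hm
      rcases Nat.eq_zero_or_pos m with hm0 | hm1
      · subst hm0
        show gRem d k (gw d (k + 1) - 1) 0 % gw d (k - 0) = _
        simp only [Nat.sub_zero, gRem]
        obtain ⟨hrec, hlt⟩ := gw_facts d hd hde k (by omega)
        have hdec := decomp1 (lucas d) (gw d (k - 1)) (gw d k) (gw d (k + 1)) hrec hL hlt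
        have := (divmod_key (gw d k) (lucas d - 1) (gw d k - gw d (k - 1) - 1)
          (gw d (k + 1) - 1) hdec (by omega)).1
        rw [this, show k - (0 + 1) + 1 = k by omega, show k - (0 + 1) = k - 1 by omega]
      · have hmk : m ≤ k - 1 := by omega
        have hr := ih hm1 hmk
        show gRem d k (gw d (k + 1) - 1) m % gw d (k - m) = _
        rw [hr]
        have hj : 1 ≤ k - m := by omega
        obtain ⟨hrec, hlt⟩ := gw_facts d hd hde (k - m) hj
        have e1 : k - m + 1 = k - m + 1 := rfl
        have hdec := decomp2 (lucas d) (gw d (k - m - 1)) (gw d (k - m)) (gw d (k - m + 1))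
          hrec hL hlt
        have := (divmod_key (gw d (k - m)) (lucas d - 2)
          (gw d (k - m) - gw d (k - m - 1) - 1)
          (gw d (k - m + 1) - gw d (k - m) - 1) hdec (by omega)).1
        rw [this]
        have e2 : k - (m + 1) + 1 = k - m := by omega
        have e3 : k - (m + 1) = k - m - 1 := by omega
        rw [e2, e3]

lemma gLam_top (d k : ℕ) (hd : 0 < d) (hde : Even d) (hk : 1 < k) :
    gLam d k (gw d (k + 1) - 1) k = lucas d - 1 := by
  have hL := lucas_ge_three' d hd hde
  obtain ⟨hrec, hlt⟩ := gw_facts d hd hde k (by omega)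
  have hdec := decomp1 (lucas d) (gw d (k - 1)) (gw d k) (gw d (k + 1)) hrec hL hlt
  have := (divmod_key (gw d k) (lucas d - 1) (gw d k - gw d (k - 1) - 1)
    (gw d (k + 1) - 1) hdec (by omega)).2
  simpa [gLam, Nat.sub_self, gRem] using this

lemma gLam_low (d k : ℕ) (hd : 0 < d) (hde : Even d) (hk : 1 < k)
    (i : ℕ) (hi1 : 1 ≤ i) (hik : i ≤ k - 1) :
    gLam d k (gw d (k + 1) - 1) i = lucas d - 2 := by
  have hL := lucas_ge_three' d hd hde
  have hm1 : 1 ≤ k - i := by omega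
  have hm2 : k - i ≤ k - 1 := by omega
  have hr := gRem_eq d k hd hde hk (k - i) hm1 hm2
  have e1 : k - (k - i) = i := by omega
  rw [e1] at hr
  unfold gLam
  rw [hr]
  obtain ⟨hrec, hlt⟩ := gw_facts d hd hde i hi1
  have hdec := decomp2 (lucas d) (gw d (i - 1)) (gw d i) (gw d (i + 1)) hrec hL hlt
  exact (divmod_key (gw d i) (lucas d - 2) (gw d i - gw d (i - 1) - 1)
    (gw d (i + 1) - gw d i - 1) hdec (by omega)).2

lemma final_sum (V : ℕ → ℕ) (d n : ℕ)
    (hZ : ∀ m, (V (m + 2 * d) : ℤ) = (lucas d : ℤ) * V (m + d) - V m) :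
    ∀ K : ℕ, ((lucas d : ℤ) - 2) * (∑ i ∈ Finset.Icc 1 (K + 1), (V (n + i * d) : ℤ))
        + ((lucas d : ℤ) - 1) * V (n + (K + 2) * d)
      = (V (n + (K + 3) * d) : ℤ) - V (n + d) + V n := by
  intro K
  induction K with
  | zero =>
      simp only [Finset.Icc_self, Finset.sum_singleton, one_mul]
      have h1 := hZ n
      have h2 := hZ (n + d)
      rw [show n + d + 2 * d = n + 3 * d by ring, show n + d + d = n + 2 * d by ring] at h2
      rw [show n + 2 * d = n + 2 * d from rfl] at h1
      rw [show (0 : ℕ) + 2 = 2 from rfl, show (0 : ℕ) + 3 = 3 from rfl]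
      linear_combination -h1 - h2
  | succ K ih =>
      rw [Finset.sum_Icc_succ_top (by omega : 1 ≤ K + 1 + 1)]
      have hrec := hZ (n + (K + 2) * d)
      rw [show n + (K + 2) * d + 2 * d = n + (K + 4) * d by ring,
          show n + (K + 2) * d + d = n + (K + 3) * d by ring] at hrec
      rw [show K + 1 + 1 = K + 2 from rfl, show K + 1 + 2 = K + 3 from rfl,
          show K + 1 + 3 = K + 4 from rfl]
      linear_combination ih - hrec

theorem greedy_s_at_fib_ratio_sub_one
    (V : ℕ → ℕ) (hV : ∀ m, V (m + 2) = V (m + 1) + V m)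
    (hVpos : ∀ m, 1 ≤ m → 0 < V m)
    (d n k : ℕ) (hd : 0 < d) (hde : Even d) (hn : 1 ≤ n) (hk : 1 < k) :
    ((∑ i ∈ Finset.Icc 1 k,
        gLam d k (Nat.fib ((k + 1) * d) / Nat.fib d - 1) i * V (n + i * d) : ℕ) : ℤ)
      = (V (n + (k + 1) * d) : ℤ) - V (n + d) + V n := by
  have hL := lucas_ge_three' d hd hde
  have hx : Nat.fib ((k + 1) * d) / Nat.fib d - 1 = gw d (k + 1) - 1 := rfl
  rw [hx]
  obtain ⟨K, rfl⟩ : ∃ K, k = K + 2 := ⟨k - 2, by omega⟩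
  rw [Finset.sum_Icc_succ_top (by omega : 1 ≤ K + 1 + 1)]
  have htop : gLam d (K + 2) (gw d (K + 2 + 1) - 1) (K + 1 + 1) = lucas d - 1 :=
    gLam_top d (K + 2) hd hde hk
  have hlow : ∀ i ∈ Finset.Icc 1 (K + 1),
      gLam d (K + 2) (gw d (K + 2 + 1) - 1) i * V (n + i * d)
        = (lucas d - 2) * V (n + i * d) := by
    intro i hi
    rw [Finset.mem_Icc] at hi
    rw [gLam_low d (K + 2) hd hde hk i hi.1 (by omega)]
  rw [Finset.sum_congr rfl hlow, htop]
  have c2 : ((lucas d - 2 : ℕ) : ℤ) = (lucas d : ℤ) - 2 := by omega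
  have c1 : ((lucas d - 1 : ℕ) : ℤ) = (lucas d : ℤ) - 1 := by omega
  have hZ : ∀ m, (V (m + 2 * d) : ℤ) = (lucas d : ℤ) * V (m + d) - V m := by
    intro m
    have := lucasV V hV d hd hde m
    have := congrArg (Nat.cast (R := ℤ)) this
    push_cast at this
    linarith
  have hfin := final_sum V d n hZ K
  rw [show K + 2 + 1 = K + 3 from rfl, ← hfin]
  push_cast [c2, c1]
  rw [Finset.mul_sum]
end

section
/- For every positive even integer d, positive integers q and r with 1 ≤ r ≤ d−1, F_d · F_{qd+r} = F_r · F_{(q+1)d} + (−1)^r F_{d−r} · F_{qd}, and F_d · L_{qd+r} = L_r · F_{(q+1)d} − (−1)^r L_{d−r} · F_{qd}. -/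
lemma lucas_add_two (n : ℕ) : lucas (n + 2) = lucas (n + 1) + lucas n := rfl

lemma lucas_fib : ∀ k : ℕ, (lucas k : ℤ) = 2 * Nat.fib (k + 1) - Nat.fib k
  | 0 => by simp [lucas]
  | 1 => by simp [lucas]
  | (k + 2) => by
    have h1 : (lucas (k + 1) : ℤ) = 2 * Nat.fib (k + 2) - Nat.fib (k + 1) := lucas_fib (k + 1)
    have h2 : (lucas k : ℤ) = 2 * Nat.fib (k + 1) - Nat.fib k := lucas_fib k
    have hf : (Nat.fib (k + 3) : ℤ) = Nat.fib (k + 1) + Nat.fib (k + 2) := by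
      exact_mod_cast Nat.fib_add_two (n := k + 1)
    have hf2 : (Nat.fib (k + 2) : ℤ) = Nat.fib k + Nat.fib (k + 1) := by
      exact_mod_cast Nat.fib_add_two (n := k)
    show (↑(lucas (k + 1) + lucas k) : ℤ) = 2 * Nat.fib (k + 3) - Nat.fib (k + 2)
    push_cast
    linear_combination h1 + h2 - 2 * hf + hf2

lemma fib_catalan (k : ℕ) : ∀ n : ℕ,
    (Nat.fib (n + k + 1) : ℤ) * Nat.fib n - (Nat.fib (n + k) : ℤ) * Nat.fib (n + 1)
      = (-1) ^ (n + 1) * Nat.fib k := by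
  intro n
  induction n with
  | zero => simp
  | succ n ih =>
    rw [show n + 1 + k + 1 = n + k + 2 by omega, show n + 1 + k = n + k + 1 by omega,
      show n + 1 + 1 = n + 2 by omega]
    have h1 : (Nat.fib (n + k + 2) : ℤ) = Nat.fib (n + k) + Nat.fib (n + k + 1) := by
      exact_mod_cast Nat.fib_add_two (n := n + k)
    have h2 : (Nat.fib (n + 2) : ℤ) = Nat.fib n + Nat.fib (n + 1) := by
      exact_mod_cast Nat.fib_add_two (n := n)
    rw [h1, h2]
    linear_combination (-1) * ih

lemma lucas_catalan (k : ℕ) : ∀ n : ℕ,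
    (Nat.fib (n + k + 1) : ℤ) * lucas n - (Nat.fib (n + k) : ℤ) * lucas (n + 1)
      = (-1) ^ n * lucas k := by
  intro n
  induction n with
  | zero =>
    simp only [Nat.zero_add, pow_zero, one_mul]
    rw [lucas_fib k, show (lucas 0 : ℤ) = 2 from by simp [lucas],
      show (lucas 1 : ℤ) = 1 from by simp [lucas]]
    ring
  | succ n ih =>
    rw [show n + 1 + k + 1 = n + k + 2 by omega, show n + 1 + k = n + k + 1 by omega,
      show n + 1 + 1 = n + 2 by omega]
    have h1 : (Nat.fib (n + k + 2) : ℤ) = Nat.fib (n + k) + Nat.fib (n + k + 1) := by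
      exact_mod_cast Nat.fib_add_two (n := n + k)
    have h2 : (lucas (n + 2) : ℤ) = lucas n + lucas (n + 1) := by
      rw [lucas_add_two]; push_cast; ring
    rw [h1, h2]
    linear_combination (-1) * ih

theorem fib_lucas_decomposition (d q r : ℕ) (hd : 0 < d) (hde : Even d)
    (hq : 1 ≤ q) (hr : 1 ≤ r) (hrd : r ≤ d - 1) :
    (Nat.fib d : ℤ) * Nat.fib (q * d + r)
      = (Nat.fib r : ℤ) * Nat.fib ((q + 1) * d)
        + (-1) ^ r * (Nat.fib (d - r) : ℤ) * Nat.fib (q * d) ∧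
    (Nat.fib d : ℤ) * lucas (q * d + r)
      = (lucas r : ℤ) * Nat.fib ((q + 1) * d)
        - (-1) ^ r * (lucas (d - r) : ℤ) * Nat.fib (q * d) := by
  obtain ⟨s, rfl⟩ : ∃ s, r = s + 1 := ⟨r - 1, by omega⟩
  obtain ⟨t, rfl⟩ : ∃ t, d = t + 1 := ⟨d - 1, by omega⟩
  have hst : s ≤ t := by omega
  set a := q * (t + 1) with ha
  have e1 : q * (t + 1) + (s + 1) = a + s + 1 := by ring
  have e2 : (q + 1) * (t + 1) = a + t + 1 := by ring
  have e3 : t + 1 - (s + 1) = t - s := by omega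
  rw [e1, e2, e3]
  have h1 : (Nat.fib (a + s + 1) : ℤ) = Nat.fib a * Nat.fib s + Nat.fib (a + 1) * Nat.fib (s + 1) := by
    rw [Nat.fib_add]; push_cast; ring
  have h2 : (Nat.fib (a + t + 1) : ℤ) = Nat.fib a * Nat.fib t + Nat.fib (a + 1) * Nat.fib (t + 1) := by
    rw [Nat.fib_add]; push_cast; ring
  have h3 : (Nat.fib (a + s + 2) : ℤ) = Nat.fib (a + 1) * Nat.fib s + Nat.fib (a + 2) * Nat.fib (s + 1) := by
    rw [show a + s + 2 = (a + 1) + s + 1 by ring, Nat.fib_add]; push_cast; ring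
  have h4 : (Nat.fib (a + 2) : ℤ) = Nat.fib a + Nat.fib (a + 1) := by
    exact_mod_cast Nat.fib_add_two (n := a)
  have hA := fib_catalan (t - s) s
  rw [show s + (t - s) = t by omega] at hA
  have hB := lucas_catalan (t - s) s
  rw [show s + (t - s) = t by omega] at hB
  have hL1 : (lucas (a + s + 1) : ℤ) = 2 * Nat.fib (a + s + 2) - Nat.fib (a + s + 1) :=
    lucas_fib (a + s + 1)
  have hL2 : (lucas (s + 1) : ℤ) = 2 * Nat.fib (s + 2) - Nat.fib (s + 1) := lucas_fib (s + 1)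
  have hL3 : (lucas s : ℤ) = 2 * Nat.fib (s + 1) - Nat.fib s := lucas_fib s
  have hF : (Nat.fib (s + 2) : ℤ) = Nat.fib s + Nat.fib (s + 1) := by
    exact_mod_cast Nat.fib_add_two (n := s)
  constructor
  · linear_combination (Nat.fib (t + 1) : ℤ) * h1 - (Nat.fib (s + 1) : ℤ) * h2
      + (Nat.fib a : ℤ) * hA
  · linear_combination (Nat.fib (t + 1) : ℤ) * hL1 + 2 * (Nat.fib (t + 1) : ℤ) * h3
      - (Nat.fib (t + 1) : ℤ) * h1 + 2 * (Nat.fib (t + 1) : ℤ) * (Nat.fib (s + 1) : ℤ) * h4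
      - (lucas (s + 1) : ℤ) * h2 + (Nat.fib a : ℤ) * hB
      - (Nat.fib a : ℤ) * (Nat.fib (t + 1) : ℤ) * hL3
      - (Nat.fib (a + 1) : ℤ) * (Nat.fib (t + 1) : ℤ) * hL2
      - 2 * (Nat.fib (a + 1) : ℤ) * (Nat.fib (t + 1) : ℤ) * hF
end
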